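/- arXiv:2207.12284 — 2 statements merged into one kernel-verified Lean document; each statement's English description precedes it below -/
import Mathlib

section
/- Let a, b, v₀, μ₀, α₀ be positive real constants and let C = exp((μ₀ + b·α₀)/a) / (2·v₀). Define μ(r, y) = a·arcsinh(C·|r|·(1 + (b/a)·(y − α₀))). Then for all r₁, r₂ ∈ ℝ and y₁, y₂ ∈ ℝ, |μ(r₁, y₁) − μ(r₂, y₂)| ≤ C·( b·|r₁|·|y₁ − y₂| + (|a − b·α₀| + b·|y₂|)·|r₁ − r₂| ). -/
lemma arsinh_lip (x y : ℝ) : |Real.arsinh x - Real.arsinh y| ≤ |x - y| := by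
  have h := (convex_univ (𝕜 := ℝ) (E := ℝ)).norm_image_sub_le_of_norm_hasDerivWithin_le
    (f := Real.arsinh) (f' := fun x => (Real.sqrt (1 + x ^ 2))⁻¹) (C := 1)
    (fun z _ => (Real.hasDerivAt_arsinh z).hasDerivWithinAt)
    (fun z _ => by
      rw [Real.norm_eq_abs, abs_inv, abs_of_nonneg (Real.sqrt_nonneg _)]
      rw [inv_le_one_iff₀]
      right
      nlinarith [Real.sq_sqrt (show (0:ℝ) ≤ 1 + z ^ 2 by positivity),
        Real.sqrt_nonneg (1 + z ^ 2), sq_nonneg z, sq_nonneg (Real.sqrt (1 + z ^ 2) - 1)])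
    (Set.mem_univ y) (Set.mem_univ x)
  simpa [Real.norm_eq_abs] using h

theorem friction_approx_lipschitz (a b v₀ μ₀ α₀ : ℝ)
    (ha : 0 < a) (hb : 0 < b) (hv₀ : 0 < v₀) (hμ₀ : 0 < μ₀) (hα₀ : 0 < α₀)
    (C : ℝ) (hC : C = Real.exp ((μ₀ + b * α₀) / a) / (2 * v₀))
    (μ : ℝ → ℝ → ℝ)
    (hμ : ∀ r y, μ r y = a * Real.arsinh (C * |r| * (1 + (b / a) * (y - α₀)))) :
    ∀ r₁ r₂ y₁ y₂ : ℝ,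
      |μ r₁ y₁ - μ r₂ y₂| ≤
        C * (b * |r₁| * |y₁ - y₂| + (|a - b * α₀| + b * |y₂|) * |r₁ - r₂|) := by
  intro r₁ r₂ y₁ y₂
  have hCpos : 0 < C := by
    rw [hC]; positivity
  rw [hμ, hμ, ← mul_sub, abs_mul, abs_of_pos ha]
  set x₁ := C * |r₁| * (1 + (b / a) * (y₁ - α₀))
  set x₂ := C * |r₂| * (1 + (b / a) * (y₂ - α₀))
  have key : a * |x₁ - x₂| ≤
      C * (b * |r₁| * |y₁ - y₂| + (|a - b * α₀| + b * |y₂|) * |r₁ - r₂|) := by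
    have hax : a * (x₁ - x₂) =
        C * (|r₁| * (a + b * (y₁ - α₀)) - |r₂| * (a + b * (y₂ - α₀))) := by
      simp only [x₁, x₂]
      field_simp
    have h := congrArg abs hax
    rw [abs_mul, abs_mul, abs_of_pos ha, abs_of_pos hCpos] at h
    rw [h]
    apply mul_le_mul_of_nonneg_left _ hCpos.le
    have decomp : |r₁| * (a + b * (y₁ - α₀)) - |r₂| * (a + b * (y₂ - α₀)) =
        |r₁| * (b * (y₁ - y₂)) + (a + b * (y₂ - α₀)) * (|r₁| - |r₂|) := by ring
    calc |(|r₁|) * (a + b * (y₁ - α₀)) - |r₂| * (a + b * (y₂ - α₀))|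
        ≤ |(|r₁|) * (b * (y₁ - y₂))| + |(a + b * (y₂ - α₀)) * (|r₁| - |r₂|)| := by
          rw [decomp]; exact abs_add_le _ _
      _ ≤ b * |r₁| * |y₁ - y₂| + (|a - b * α₀| + b * |y₂|) * |r₁ - r₂| := by
          have h1 : |(|r₁|) * (b * (y₁ - y₂))| = b * |r₁| * |y₁ - y₂| := by
            rw [abs_mul, abs_abs, abs_mul, abs_of_pos hb]; ring
          have h2 : |a + b * (y₂ - α₀)| ≤ |a - b * α₀| + b * |y₂| := by
            calc |a + b * (y₂ - α₀)| = |(a - b * α₀) + b * y₂| := by ring_nf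
              _ ≤ |a - b * α₀| + |b * y₂| := abs_add_le _ _
              _ = |a - b * α₀| + b * |y₂| := by rw [abs_mul, abs_of_pos hb]
          have h3 : ‖|r₁| - |r₂|‖ ≤ |r₁ - r₂| := abs_abs_sub_abs_le_abs_sub _ _
          have h4 : |(a + b * (y₂ - α₀)) * (|r₁| - |r₂|)| ≤
              (|a - b * α₀| + b * |y₂|) * |r₁ - r₂| := by
            rw [abs_mul]
            exact mul_le_mul h2 h3 (abs_nonneg _) (by positivity)
          linarith [h1.le, h4]
  calc a * |Real.arsinh x₁ - Real.arsinh x₂| ≤ a * |x₁ - x₂| := by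
        exact mul_le_mul_of_nonneg_left (arsinh_lip _ _) ha.le
    _ ≤ _ := key
end

section
/- Let a, b, v₀, μ₀, α₀ be positive real constants and set C' = exp((μ₀ + b·α₀)/(2a)) / sqrt(2·v₀). Define μ(r, y) = a·arcsinh( (1/(2v₀))·exp((μ₀ + b·α₀)/a)·|r|·(1 + (b/a)·(y − α₀)) ). Then for all r, y ∈ ℝ, |μ(r, y)| ≤ C'·( (a + b·α₀) + b·|y| + a·|r| ). -/
lemma abs_arsinh (x : ℝ) : |Real.arsinh x| = Real.arsinh |x| := by
  rcases le_total 0 x with h | h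
  · rw [abs_of_nonneg h, abs_of_nonneg (Real.arsinh_nonneg_iff.2 h)]
  · rw [abs_of_nonpos h, abs_of_nonpos (Real.arsinh_nonpos_iff.2 h), ← Real.arsinh_neg]

lemma arsinh_mul_le_add (x y : ℝ) (hx : 0 ≤ x) (hy : 0 ≤ y) :
    Real.arsinh (x * y) ≤ x + y := by
  have h1 : x ≤ Real.sinh x := Real.self_le_sinh_iff.2 hx
  have h2 : y ≤ Real.sinh y := Real.self_le_sinh_iff.2 hy
  have hsx : 0 ≤ Real.sinh x := Real.sinh_nonneg_iff.2 hx
  have hsy : 0 ≤ Real.sinh y := Real.sinh_nonneg_iff.2 hy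
  have hcx : Real.sinh x < Real.cosh x := Real.sinh_lt_cosh x
  have hcy : Real.sinh y < Real.cosh y := Real.sinh_lt_cosh y
  have hkey : x * y ≤ Real.sinh (x + y) := by
    rw [Real.sinh_add]
    nlinarith [mul_le_mul h1 h2 hy hsx]
  calc Real.arsinh (x * y) ≤ Real.arsinh (Real.sinh (x + y)) :=
        Real.arsinh_le_arsinh.2 hkey
    _ = x + y := Real.sinh_arsinh (x + y) ▸ Real.arsinh_sinh (x + y)

theorem friction_approx_growth_bound (a b v₀ μ₀ α₀ : ℝ)
    (ha : 0 < a) (hb : 0 < b) (hv₀ : 0 < v₀) (hμ₀ : 0 < μ₀) (hα₀ : 0 < α₀)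
    (C' : ℝ) (hC' : C' = Real.exp ((μ₀ + b * α₀) / (2 * a)) / Real.sqrt (2 * v₀))
    (μ : ℝ → ℝ → ℝ)
    (hμ : ∀ r y, μ r y =
      a * Real.arsinh ((1 / (2 * v₀)) * Real.exp ((μ₀ + b * α₀) / a) * |r| *
        (1 + (b / a) * (y - α₀)))) :
    ∀ r y : ℝ, |μ r y| ≤ C' * ((a + b * α₀) + b * |y| + a * |r|) := by
  intro r y
  have hC'pos : 0 < C' := by
    rw [hC']
    positivity
  -- C'^2 = exp(../a) / (2 v₀)
  have hsq : C' ^ 2 = Real.exp ((μ₀ + b * α₀) / a) / (2 * v₀) := by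
    rw [hC', div_pow, ← Real.exp_nat_mul, Real.sq_sqrt (by positivity)]
    congr 1
    field_simp
    ring
  set A : ℝ := (1 / (2 * v₀)) * Real.exp ((μ₀ + b * α₀) / a) * |r| *
      (1 + (b / a) * (y - α₀)) with hA
  have habs : |A| = (C' * |1 + (b / a) * (y - α₀)|) * (C' * |r|) := by
    have : |A| = (1 / (2 * v₀)) * Real.exp ((μ₀ + b * α₀) / a) * |r| *
        |1 + (b / a) * (y - α₀)| := by
      rw [hA, abs_mul, abs_of_nonneg (show (0:ℝ) ≤ (1 / (2 * v₀)) *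
        Real.exp ((μ₀ + b * α₀) / a) * |r| by positivity)]
    rw [this]
    have : (1 / (2 * v₀)) * Real.exp ((μ₀ + b * α₀) / a) = C' ^ 2 := by
      rw [hsq]; ring
    rw [this]; ring
  have harsinh : |Real.arsinh A| ≤ C' * |1 + (b / a) * (y - α₀)| + C' * |r| := by
    rw [abs_arsinh, habs]
    exact arsinh_mul_le_add _ _ (by positivity) (by positivity)
  have hlin : a * |1 + (b / a) * (y - α₀)| ≤ (a + b * α₀) + b * |y| := by
    have hprod : a * (1 + (b / a) * (y - α₀)) = a + b * (y - α₀) := by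
      field_simp
    have : a * |1 + (b / a) * (y - α₀)| = |a + b * (y - α₀)| := by
      rw [← hprod, abs_mul, abs_of_pos ha]
    rw [this]
    calc |a + b * (y - α₀)| ≤ |a - b * α₀| + |b * y| := by
          have : a + b * (y - α₀) = (a - b * α₀) + b * y := by ring
          rw [this]; exact abs_add_le _ _
      _ ≤ (a + b * α₀) + b * |y| := by
          rw [abs_mul, abs_of_pos hb]
          have h1 : |a - b * α₀| ≤ a + b * α₀ := by
            rw [abs_le]
            constructor <;> nlinarith [abs_nonneg y]
          linarith
  have := hμ r y
  rw [this, abs_mul, abs_of_pos ha]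
  calc a * |Real.arsinh A| ≤ a * (C' * |1 + (b / a) * (y - α₀)| + C' * |r|) := by
        exact mul_le_mul_of_nonneg_left harsinh ha.le
    _ = C' * (a * |1 + (b / a) * (y - α₀)|) + C' * (a * |r|) := by ring
    _ ≤ C' * ((a + b * α₀) + b * |y|) + C' * (a * |r|) := by
        gcongr
    _ = C' * ((a + b * α₀) + b * |y| + a * |r|) := by ring
end
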